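/- arXiv:2404.06642 — 2 statements merged into one kernel-verified Lean document; each statement's English description precedes it below -/
import Mathlib

section
/- For u > 1 and τ ∈ (0, 1/4), one has (1+2τ)(u^{τ-1/2} - u^{-τ-1}) + (1-2τ)(u^{τ-1} - u^{-τ-1/2}) > 4τ (u^{-τ-1/2} - u^{τ-1}) > 0. -/
open Real Set

theorem rpow_combination_pos_of_lt_quarter (u τ : ℝ) (hu : 1 < u)
    (hτ : τ ∈ Set.Ioo (0 : ℝ) (1 / 4)) :
    (1 + 2 * τ) * (u ^ (τ - 1 / 2) - u ^ (-τ - 1)) +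
        (1 - 2 * τ) * (u ^ (τ - 1) - u ^ (-τ - 1 / 2))
      > 4 * τ * (u ^ (-τ - 1 / 2) - u ^ (τ - 1)) ∧
    4 * τ * (u ^ (-τ - 1 / 2) - u ^ (τ - 1)) > 0 := by
  obtain ⟨h0, h4⟩ := hτ
  have h1 : u ^ (-τ - 1/2 : ℝ) < u ^ (τ - 1/2 : ℝ) := by
    rw [Real.rpow_lt_rpow_left_iff hu]; linarith
  have h2 : u ^ (-τ - 1 : ℝ) < u ^ (τ - 1 : ℝ) := by
    rw [Real.rpow_lt_rpow_left_iff hu]; linarith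
  have h3 : u ^ (τ - 1 : ℝ) < u ^ (-τ - 1/2 : ℝ) := by
    rw [Real.rpow_lt_rpow_left_iff hu]; linarith
  constructor
  · nlinarith
  · nlinarith
end

section
/- Let ψ(y) = ∑_{n=1}^∞ e^{-π n² y}. For every τ ∈ (0, 1/2], the quantity 4τ ∫_1^∞ (u^{(2τ-3)/4} + u^{(-2τ-3)/4}) ψ(u) du - (1/4 - τ²) ∫_1^∞ (u^{(2τ-3)/4} - u^{(-2τ-3)/4}) (ln u) ψ(u) du is strictly positive. -/
open Real Set
open MeasureTheory

noncomputable def jacobiPsi (y : ℝ) : ℝ := ∑' n : ℕ, Real.exp (-π * ((n : ℝ) + 1) ^ 2 * y)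

lemma summable_psi {y : ℝ} (hy : 0 < y) :
    Summable fun n : ℕ => Real.exp (-π * ((n : ℝ) + 1) ^ 2 * y) := by
  have hπy : 0 < π * y := mul_pos Real.pi_pos hy
  refine Summable.of_nonneg_of_le (fun n => (Real.exp_pos _).le)
    (f := fun n : ℕ => Real.exp (-(π * y)) ^ n) (fun n => ?_) ?_
  · show _ ≤ Real.exp (-(π * y)) ^ n
    rw [← Real.exp_nat_mul]
    apply Real.exp_le_exp.2
    have h1 : (n : ℝ) ≤ ((n : ℝ) + 1) ^ 2 := by nlinarith [Nat.cast_nonneg (α := ℝ) n]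
    nlinarith
  · exact summable_geometric_of_lt_one (Real.exp_pos _).le
      (Real.exp_lt_one_iff.2 (neg_neg_of_pos hπy))

lemma psi_nonneg (y : ℝ) : 0 ≤ jacobiPsi y :=
  tsum_nonneg fun n => (Real.exp_pos _).le

lemma psi_ge {y : ℝ} (hy : 0 < y) : Real.exp (-π * y) ≤ jacobiPsi y := by
  have h := Summable.le_tsum (summable_psi hy) 0 (fun n _ => (Real.exp_pos _).le)
  rw [jacobiPsi]
  refine le_trans (le_of_eq (by norm_num)) h

lemma psi_le {y : ℝ} (hy : 1 ≤ y) : jacobiPsi y ≤ 2 * Real.exp (-π * y) := by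
  have hy0 : 0 < y := by linarith
  have hπy : 0 < π * y := mul_pos Real.pi_pos hy0
  set r := Real.exp (-(π * y)) with hr
  have hr0 : 0 ≤ r := (Real.exp_pos _).le
  have hr1 : r < 1 := Real.exp_lt_one_iff.2 (neg_neg_of_pos hπy)
  have hsum : Summable fun n : ℕ => r * r ^ n :=
    (summable_geometric_of_lt_one hr0 hr1).mul_left r
  have hle : jacobiPsi y ≤ ∑' n : ℕ, r * r ^ n := by
    refine Summable.tsum_le_tsum (fun n => ?_) (summable_psi hy0) hsum
    have : r * r ^ n = Real.exp (-(π * y) * ((n : ℝ) + 1)) := by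
      rw [hr, ← Real.exp_nat_mul, ← Real.exp_add]; ring_nf
    rw [this]
    apply Real.exp_le_exp.2
    have h1 : (n : ℝ) + 1 ≤ ((n : ℝ) + 1) ^ 2 := by nlinarith [Nat.cast_nonneg (α := ℝ) n]
    nlinarith
  have hgeom : ∑' n : ℕ, r * r ^ n = r * (1 - r)⁻¹ := by
    rw [tsum_mul_left, tsum_geometric_of_lt_one hr0 hr1]
  have hrhalf : r ≤ 1 / 2 := by
    have h1 : r ≤ Real.exp (-1) := by
      apply Real.exp_le_exp.2
      have : 1 ≤ π * y := by nlinarith [Real.pi_gt_three]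
      linarith
    have h2 : Real.exp (-1) ≤ 1 / 2 := by
      rw [Real.exp_neg, inv_le_comm₀ (Real.exp_pos 1) (by norm_num)]
      nlinarith [Real.exp_one_gt_d9]
    linarith
  have hinv : (1 - r)⁻¹ ≤ 2 := by
    rw [inv_le_comm₀ (by linarith) (by norm_num)]
    linarith
  calc jacobiPsi y ≤ r * (1 - r)⁻¹ := by rw [← hgeom]; exact hle
    _ ≤ r * 2 := mul_le_mul_of_nonneg_left hinv hr0
    _ = 2 * Real.exp (-π * y) := by rw [hr]; ring_nf

lemma psi_contOn : ContinuousOn jacobiPsi (Ici (1 : ℝ)) := by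
  apply continuousOn_tsum (u := fun n : ℕ => Real.exp (-π * ((n : ℝ) + 1) ^ 2))
  · intro i
    exact (Continuous.continuousOn (by continuity))
  · simpa using summable_psi one_pos
  · intro n x hx
    rw [Real.norm_eq_abs, abs_of_pos (Real.exp_pos _)]
    apply Real.exp_le_exp.2
    have hn : (0:ℝ) < ((n : ℝ) + 1) ^ 2 := by positivity
    have hx1 : (1:ℝ) ≤ x := hx
    nlinarith [mul_nonneg (mul_pos Real.pi_pos hn).le (by linarith : (0:ℝ) ≤ x - 1)]

lemma exp_bd1 {u : ℝ} (hu : 1 ≤ u) : (u - 1) * Real.exp (-π * u) ≤ Real.exp (-u) := by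
  have h1 : u - 1 ≤ Real.exp (u - 2) := by
    have := Real.add_one_le_exp (u - 2); linarith
  calc (u - 1) * Real.exp (-π * u) ≤ Real.exp (u - 2) * Real.exp (-π * u) :=
        mul_le_mul_of_nonneg_right h1 (Real.exp_pos _).le
    _ = Real.exp (u - 2 + -π * u) := (Real.exp_add _ _).symm
    _ ≤ Real.exp (-u) := by
        apply Real.exp_le_exp.2
        nlinarith [Real.pi_gt_three]

lemma exp_bd2 {u : ℝ} (hu : 1 ≤ u) :
    (u - 1) ^ 2 * Real.exp (-π * u) ≤ Real.exp (-1 - π) * Real.exp (-u) := by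
  have h1 : u - 1 ≤ Real.exp (u - 2) := by
    have := Real.add_one_le_exp (u - 2); linarith
  have h2 : (u - 1) ^ 2 ≤ Real.exp (2 * u - 4) := by
    have := pow_le_pow_left₀ (by linarith) h1 2
    calc (u-1)^2 ≤ Real.exp (u-2) ^ 2 := this
      _ = Real.exp (2*u - 4) := by rw [← Real.exp_nat_mul]; ring_nf
  calc (u - 1)^2 * Real.exp (-π * u) ≤ Real.exp (2*u-4) * Real.exp (-π * u) :=
        mul_le_mul_of_nonneg_right h2 (Real.exp_pos _).le
    _ = Real.exp (2*u - 4 + -π * u) := (Real.exp_add _ _).symm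
    _ ≤ Real.exp (-1 - π + -u) := by
        apply Real.exp_le_exp.2
        nlinarith [Real.pi_gt_three]
    _ = _ := Real.exp_add _ _

lemma rpow_key {u τ : ℝ} (hu : 1 ≤ u) (hτ : 0 < τ) :
    u ^ ((2*τ-3)/4) - u ^ ((-2*τ-3)/4) ≤ τ * u ^ ((2*τ-3)/4) * Real.log u := by
  have hu0 : 0 < u := by linarith
  set x := u ^ τ with hxdef
  have hx1 : 1 ≤ x := by
    rw [hxdef, ← Real.rpow_zero u]
    exact Real.rpow_le_rpow_of_exponent_le hu (by linarith)
  have hx0 : 0 < x := by linarith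
  have hlog : x - 1 ≤ x * Real.log x := by
    have h := Real.log_le_sub_one_of_pos (inv_pos.2 hx0)
    rw [Real.log_inv] at h
    have hxx : x * x⁻¹ = 1 := mul_inv_cancel₀ (ne_of_gt hx0)
    nlinarith
  have hsplit : u ^ ((2*τ-3)/4) = u ^ ((-2*τ-3)/4) * x := by
    rw [hxdef, ← Real.rpow_add hu0]; ring_nf
  have hlogx : Real.log x = τ * Real.log u := Real.log_rpow hu0 τ
  have hb0 : 0 ≤ u ^ ((-2*τ-3)/4) := Real.rpow_nonneg hu0.le _
  calc u ^ ((2*τ-3)/4) - u ^ ((-2*τ-3)/4) = u ^ ((-2*τ-3)/4) * (x - 1) := by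
        rw [hsplit]; ring
    _ ≤ u ^ ((-2*τ-3)/4) * (x * Real.log x) := mul_le_mul_of_nonneg_left hlog hb0
    _ = τ * u ^ ((2*τ-3)/4) * Real.log u := by rw [hlogx, hsplit]; ring

set_option maxHeartbeats 2000000 in
theorem a_tau_zero_factor_pos (τ : ℝ) (hτ : τ ∈ Set.Ioc (0 : ℝ) (1 / 2)) :
    0 < 4 * τ * (∫ u in Set.Ioi (1 : ℝ),
          (u ^ ((2 * τ - 3) / 4) + u ^ ((-2 * τ - 3) / 4)) * jacobiPsi u) -
        (1 / 4 - τ ^ 2) * ∫ u in Set.Ioi (1 : ℝ),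
          (u ^ ((2 * τ - 3) / 4) - u ^ ((-2 * τ - 3) / 4)) * Real.log u * jacobiPsi u := by
  obtain ⟨hτ0, hτh⟩ := hτ
  set a := (2 * τ - 3) / 4 with ha
  set b := (-2 * τ - 3) / 4 with hb
  set f1 : ℝ → ℝ := fun u => (u ^ a + u ^ b) * jacobiPsi u with hf1def
  set f2 : ℝ → ℝ := fun u => (u ^ a - u ^ b) * Real.log u * jacobiPsi u with hf2def
  set f3 : ℝ → ℝ := fun u => u ^ a * Real.log u ^ 2 * jacobiPsi u with hf3def
  -- basic pointwise facts on Ioi 1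
  have basic : ∀ u : ℝ, u ∈ Ioi (1:ℝ) →
      0 ≤ f1 u ∧ f1 u ≤ 4 * Real.exp (-u) ∧
      0 ≤ f2 u ∧ f2 u ≤ 4 * Real.exp (-u) ∧
      0 ≤ f3 u ∧ f3 u ≤ 2 * Real.exp (-1 - π) * Real.exp (-u) ∧
      f2 u ≤ τ * f3 u := by
    intro u hu
    have hu1 : (1:ℝ) ≤ u := le_of_lt hu
    have hu0 : (0:ℝ) < u := by linarith
    have hψ0 : 0 ≤ jacobiPsi u := psi_nonneg u
    have hψle : jacobiPsi u ≤ 2 * Real.exp (-π * u) := psi_le hu1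
    have h0a : 0 ≤ u ^ a := Real.rpow_nonneg hu0.le _
    have h0b : 0 ≤ u ^ b := Real.rpow_nonneg hu0.le _
    have hua : u ^ a ≤ 1 := Real.rpow_le_one_of_one_le_of_nonpos hu1 (by rw [ha]; linarith)
    have hub : u ^ b ≤ 1 := Real.rpow_le_one_of_one_le_of_nonpos hu1 (by rw [hb]; linarith)
    have hba : u ^ b ≤ u ^ a := Real.rpow_le_rpow_of_exponent_le hu1 (by rw [ha, hb]; linarith)
    have hlog0 : 0 ≤ Real.log u := Real.log_nonneg hu1
    have hlogu : Real.log u ≤ u - 1 := by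
      have := Real.log_le_sub_one_of_pos hu0; linarith
    have he1 : Real.exp (-π * u) ≤ Real.exp (-u) := by
      apply Real.exp_le_exp.2; nlinarith [Real.pi_gt_three]
    have he2 := exp_bd1 hu1
    have he3 := exp_bd2 hu1
    have hexp0 : (0:ℝ) ≤ Real.exp (-π * u) := (Real.exp_pos _).le
    refine ⟨?_, ?_, ?_, ?_, ?_, ?_, ?_⟩
    · exact mul_nonneg (by linarith) hψ0
    · calc f1 u ≤ (1 + 1) * (2 * Real.exp (-π * u)) := by
            apply mul_le_mul (by linarith) hψle hψ0 (by norm_num)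
        _ = 4 * Real.exp (-π * u) := by ring
        _ ≤ 4 * Real.exp (-u) := by linarith
    · exact mul_nonneg (mul_nonneg (by linarith) hlog0) hψ0
    · calc f2 u ≤ (1 * (u - 1)) * (2 * Real.exp (-π * u)) := by
            apply mul_le_mul _ hψle hψ0 (by nlinarith)
            apply mul_le_mul (by linarith) hlogu hlog0 (by norm_num)
        _ = 2 * ((u - 1) * Real.exp (-π * u)) := by ring
        _ ≤ 2 * Real.exp (-u) := by linarith
        _ ≤ 4 * Real.exp (-u) := by nlinarith [Real.exp_pos (-u)]
    · exact mul_nonneg (mul_nonneg h0a (sq_nonneg _)) hψ0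
    · have hlogsq : Real.log u ^ 2 ≤ (u - 1) ^ 2 := pow_le_pow_left₀ hlog0 hlogu 2
      calc f3 u ≤ (1 * (u - 1) ^ 2) * (2 * Real.exp (-π * u)) := by
            apply mul_le_mul _ hψle hψ0 (by nlinarith)
            apply mul_le_mul hua hlogsq (sq_nonneg _) (by norm_num)
        _ = 2 * ((u - 1) ^ 2 * Real.exp (-π * u)) := by ring
        _ ≤ 2 * (Real.exp (-1 - π) * Real.exp (-u)) := by linarith
        _ = 2 * Real.exp (-1 - π) * Real.exp (-u) := by ring
    · have hkey : u ^ a - u ^ b ≤ τ * u ^ a * Real.log u := by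
        rw [ha, hb]; exact rpow_key hu1 hτ0
      have h := mul_le_mul_of_nonneg_right
        (mul_le_mul_of_nonneg_right hkey hlog0) hψ0
      calc f2 u = (u ^ a - u ^ b) * Real.log u * jacobiPsi u := rfl
        _ ≤ τ * u ^ a * Real.log u * Real.log u * jacobiPsi u := h
        _ = τ * f3 u := by rw [hf3def]; ring
  -- measurability
  have hcont : ∀ (f : ℝ → ℝ), ContinuousOn f (Ioi 1) →
      AEStronglyMeasurable f (volume.restrict (Ioi (1:ℝ))) := fun f hf =>
    hf.aestronglyMeasurable measurableSet_Ioi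
  have hψc : ContinuousOn jacobiPsi (Ioi (1:ℝ)) := psi_contOn.mono Ioi_subset_Ici_self
  have hrc : ∀ c : ℝ, ContinuousOn (fun u : ℝ => u ^ c) (Ioi (1:ℝ)) := by
    intro c u hu
    exact (Real.continuousAt_rpow_const u c
      (Or.inl (by linarith [mem_Ioi.1 hu] : (0:ℝ) < u).ne')).continuousWithinAt
  have hlogc : ContinuousOn Real.log (Ioi (1:ℝ)) := by
    intro u hu
    exact (Real.continuousAt_log (by linarith [mem_Ioi.1 hu] : (0:ℝ) < u).ne').continuousWithinAt
  have hm1 : AEStronglyMeasurable f1 (volume.restrict (Ioi (1:ℝ))) :=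
    hcont f1 (((hrc a).add (hrc b)).mul hψc)
  have hm2 : AEStronglyMeasurable f2 (volume.restrict (Ioi (1:ℝ))) :=
    hcont f2 ((((hrc a).sub (hrc b)).mul hlogc).mul hψc)
  have hm3 : AEStronglyMeasurable f3 (volume.restrict (Ioi (1:ℝ))) :=
    hcont f3 (((hrc a).mul (hlogc.pow 2)).mul hψc)
  -- dominating function
  have hg : IntegrableOn (fun u : ℝ => 4 * Real.exp (-u)) (Ioi (1:ℝ)) := by
    have h := (exp_neg_integrableOn_Ioi (1:ℝ) one_pos).const_mul (4:ℝ)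
    simpa [IntegrableOn] using h
  have haebd : ∀ (f : ℝ → ℝ), (∀ u ∈ Ioi (1:ℝ), 0 ≤ f u ∧ f u ≤ 4 * Real.exp (-u)) →
      ∀ᵐ u ∂(volume.restrict (Ioi (1:ℝ))), ‖f u‖ ≤ 4 * Real.exp (-u) := by
    intro f hf
    rw [ae_restrict_iff' measurableSet_Ioi]
    filter_upwards with u hu
    rw [Real.norm_eq_abs, abs_of_nonneg (hf u hu).1]
    exact (hf u hu).2
  have hint1 : IntegrableOn f1 (Ioi (1:ℝ)) :=
    Integrable.mono' hg hm1 (haebd f1 fun u hu => ⟨(basic u hu).1, (basic u hu).2.1⟩)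
  have hint2 : IntegrableOn f2 (Ioi (1:ℝ)) :=
    Integrable.mono' hg hm2 (haebd f2 fun u hu => ⟨(basic u hu).2.2.1, (basic u hu).2.2.2.1⟩)
  have hexp1π : Real.exp (-1 - π) ≤ 1 := Real.exp_le_one_iff.2 (by nlinarith [Real.pi_pos])
  have hint3 : IntegrableOn f3 (Ioi (1:ℝ)) := by
    refine Integrable.mono' hg hm3 (haebd f3 fun u hu => ⟨(basic u hu).2.2.2.2.1, ?_⟩)
    have h := (basic u hu).2.2.2.2.2.1
    nlinarith [Real.exp_pos (-u)]
  -- Step A : I2 ≤ τ * I3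
  have hA : (∫ u in Ioi (1:ℝ), f2 u) ≤ τ * ∫ u in Ioi (1:ℝ), f3 u := by
    have h := setIntegral_mono_on hint2 (hint3.const_mul τ) measurableSet_Ioi
      (fun u hu => (basic u hu).2.2.2.2.2.2)
    rwa [integral_const_mul] at h
  -- Step B : I3 ≤ 2 exp(-1-π) exp(-1)
  have hB : (∫ u in Ioi (1:ℝ), f3 u) ≤ 2 * (Real.exp (-1 - π) * Real.exp (-1)) := by
    have hgB : IntegrableOn (fun u : ℝ => 2 * Real.exp (-1 - π) * Real.exp (-u)) (Ioi (1:ℝ)) := by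
      have h := (exp_neg_integrableOn_Ioi (1:ℝ) one_pos).const_mul (2 * Real.exp (-1 - π))
      simpa [IntegrableOn] using h
    have h := setIntegral_mono_on hint3 hgB measurableSet_Ioi
      (fun u hu => (basic u hu).2.2.2.2.2.1)
    rw [integral_const_mul, integral_exp_neg_Ioi] at h
    linarith
  -- Step C : lower bound for I1
  have hsub : Ioc (1:ℝ) (5/4) ⊆ Ioi 1 := Ioc_subset_Ioi_self
  have hC : (1/4) * ((4/5) * Real.exp (-π * (5/4))) ≤ ∫ u in Ioi (1:ℝ), f1 u := by
    have hlow : ∀ u ∈ Ioc (1:ℝ) (5/4), (4/5) * Real.exp (-π * (5/4)) ≤ f1 u := by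
      intro u hu
      obtain ⟨hu1, hu54⟩ := hu
      have hu0 : (0:ℝ) < u := by linarith
      have hψge : Real.exp (-π * u) ≤ jacobiPsi u := psi_ge hu0
      have hψ54 : Real.exp (-π * (5/4)) ≤ Real.exp (-π * u) := by
        apply Real.exp_le_exp.2; nlinarith [Real.pi_pos]
      have hinva : u ^ (-1 : ℝ) ≤ u ^ a :=
        Real.rpow_le_rpow_of_exponent_le hu1.le (by rw [ha]; linarith)
      have hinv : (4/5 : ℝ) ≤ u ^ (-1 : ℝ) := by
        rw [Real.rpow_neg_one]
        have hxx : u * u⁻¹ = 1 := mul_inv_cancel₀ (ne_of_gt hu0)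
        nlinarith [inv_pos.2 hu0]
      have h45a : (4/5 : ℝ) ≤ u ^ a := le_trans hinv hinva
      have hψ0 : 0 ≤ jacobiPsi u := psi_nonneg u
      have h0b : 0 ≤ u ^ b := Real.rpow_nonneg hu0.le _
      have hmain : (4/5) * Real.exp (-π * (5/4)) ≤ u ^ a * jacobiPsi u :=
        mul_le_mul h45a (le_trans hψ54 hψge) (Real.exp_pos _).le
          (le_trans (by norm_num) h45a)
      have : u ^ a * jacobiPsi u ≤ f1 u := by
        show _ ≤ (u ^ a + u ^ b) * jacobiPsi u
        nlinarith [mul_nonneg h0b hψ0]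
      linarith
    have h1 : (∫ u in Ioc (1:ℝ) (5/4), f1 u) ≤ ∫ u in Ioi (1:ℝ), f1 u := by
      apply setIntegral_mono_set hint1
      · filter_upwards [ae_restrict_mem measurableSet_Ioi] with u hu
        exact (basic u hu).1
      · exact HasSubset.Subset.eventuallyLE hsub
    have h2 : (1/4) * ((4/5) * Real.exp (-π * (5/4))) ≤ ∫ u in Ioc (1:ℝ) (5/4), f1 u := by
      have hconst : (∫ _u in Ioc (1:ℝ) (5/4), ((4/5) * Real.exp (-π * (5/4)) : ℝ))
          = (1/4) * ((4/5) * Real.exp (-π * (5/4))) := by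
        rw [setIntegral_const, Real.volume_real_Ioc, smul_eq_mul]
        norm_num
      rw [← hconst]
      exact setIntegral_mono_on (integrableOn_const (by
          rw [Real.volume_Ioc]; exact ENNReal.ofReal_ne_top))
        (hint1.mono_set hsub) measurableSet_Ioc hlow
    linarith
  -- final arithmetic
  have hI2nonneg : 0 ≤ ∫ u in Ioi (1:ℝ), f2 u :=
    setIntegral_nonneg measurableSet_Ioi fun u hu => (basic u hu).2.2.1
  have hDE : Real.exp (-1 - π) * Real.exp (-1) ≤ Real.exp (-π * (5/4)) := by
    rw [← Real.exp_add]
    apply Real.exp_le_exp.2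
    nlinarith [Real.pi_le_four]
  set I1 := ∫ u in Ioi (1:ℝ), f1 u
  set I2 := ∫ u in Ioi (1:ℝ), f2 u
  set I3 := ∫ u in Ioi (1:ℝ), f3 u
  set E := Real.exp (-π * (5/4)) with hE
  set D := Real.exp (-1 - π) * Real.exp (-1) with hD
  have hE0 : 0 < E := Real.exp_pos _
  have hD0 : 0 < D := by rw [hD]; positivity
  have h1 : 4 * τ * ((1/4) * ((4/5) * E)) ≤ 4 * τ * I1 :=
    mul_le_mul_of_nonneg_left hC (by linarith)
  have h3 : τ * I3 ≤ τ * (2 * D) := mul_le_mul_of_nonneg_left hB hτ0.le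
  have h4 : τ * D ≤ τ * E := mul_le_mul_of_nonneg_left hDE hτ0.le
  have h5 : (1/4 - τ^2) * I2 ≤ (1/4) * I2 := by nlinarith [mul_nonneg (sq_nonneg τ) hI2nonneg]
  have h6 : 0 < τ * E := mul_pos hτ0 hE0
  nlinarith [h1, h3, h4, h5, h6, hA, hI2nonneg]
end
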